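/- arXiv:2310.15814 — 2 statements merged into one kernel-verified Lean document; each statement's English description precedes it below -/
import Mathlib

section
/- Let (M^n, g, ζ, λ, μ) be a compact hyperbolic Yamabe soliton with div(ζ) = 0 and λ ≠ 0. If ∫_M ‖£_ζ£_ζ g‖² ≤ n ∫_M (μ − r)², then ζ is a Killing vector field (£_ζ g = 0) and the scalar curvature r is constant. -/
open MeasureTheory RealInnerProductSpace

/-- On a compact hyperbolic Yamabe soliton with `div ζ = 0`, `λ ≠ 0`,
if `∫ ‖£ζ£ζg‖² ≤ n ∫ (μ - r)²` then `ζ` is Killing (`£ζ g = 0`) and `r` is constant. -/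
theorem stmt_6
    {M E : Type*} [MeasureSpace M] [TopologicalSpace M] [OpensMeasurableSpace M]
    [NormedAddCommGroup E] [InnerProductSpace ℝ E]
    (n : ℕ) (hn : 0 < n)
    (g Lg LLg : M → E) (r divζ : M → ℝ) (lam mu : ℝ) (hlam : lam ≠ 0)
    -- hyperbolic Yamabe soliton equation
    (hsol : ∀ x, LLg x + lam • Lg x = (mu - r x) • g x)
    -- ‖g‖² = n, g nowhere vanishing, ⟪g, £ζ g⟫ = 2 div ζ
    (hng : ∀ x, ‖g x‖ ^ 2 = (n : ℝ))
    (hg0 : ∀ x, g x ≠ 0)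
    (hgL : ∀ x, ⟪g x, Lg x⟫ = 2 * divζ x)
    -- ζ is divergence-free
    (hdiv : ∀ x, divζ x = 0)
    -- the second Lie derivative of a vanishing first Lie derivative vanishes
    (hLie : (∀ x, Lg x = 0) → ∀ x, LLg x = 0)
    (h1 : Integrable (fun x => ‖LLg x‖ ^ 2))
    (h2 : Integrable (fun x => ‖Lg x‖ ^ 2))
    (h5 : Integrable (fun x => (mu - r x) ^ 2))
    -- regularity: continuity and positivity of the volume on nonempty open sets
    (hcont : Continuous Lg)
    (hpos : ∀ U : Set M, IsOpen U → U.Nonempty → 0 < volume U)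
    -- the assumed integral inequality
    (hle : ∫ x, ‖LLg x‖ ^ 2 ≤ (n : ℝ) * ∫ x, (mu - r x) ^ 2) :
    (∀ x, Lg x = 0) ∧ (∀ x y, r x = r y) := by
  -- pointwise identity: ‖LLg x‖² = n (μ - r x)² + λ² ‖Lg x‖²
  have key : ∀ x, ‖LLg x‖ ^ 2 = (n : ℝ) * (mu - r x) ^ 2 + lam ^ 2 * ‖Lg x‖ ^ 2 := by
    intro x
    have h : LLg x = (mu - r x) • g x - lam • Lg x := eq_sub_of_add_eq (hsol x)
    have hin : ⟪(mu - r x) • g x, lam • Lg x⟫ = 0 := by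
      rw [real_inner_smul_left, real_inner_smul_right, hgL x, hdiv x]; ring
    rw [h, norm_sub_sq_real, hin, norm_smul, norm_smul, mul_pow, mul_pow,
      Real.norm_eq_abs, Real.norm_eq_abs, sq_abs, sq_abs, hng x]
    ring
  -- integral identity and conclusion ∫ ‖Lg‖² = 0
  have hileft : ∫ x, ‖LLg x‖ ^ 2 =
      ((n : ℝ) * ∫ x, (mu - r x) ^ 2) + lam ^ 2 * ∫ x, ‖Lg x‖ ^ 2 := by
    calc ∫ x, ‖LLg x‖ ^ 2
        = ∫ x, ((n : ℝ) * (mu - r x) ^ 2 + lam ^ 2 * ‖Lg x‖ ^ 2) := by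
          exact integral_congr_ae (Filter.Eventually.of_forall key)
      _ = ((n : ℝ) * ∫ x, (mu - r x) ^ 2) + lam ^ 2 * ∫ x, ‖Lg x‖ ^ 2 := by
          rw [integral_add (h5.const_mul _) (h2.const_mul _), integral_const_mul,
            integral_const_mul]
  have hnonneg : 0 ≤ ∫ x, ‖Lg x‖ ^ 2 := integral_nonneg fun x => sq_nonneg _
  have hint0 : ∫ x, ‖Lg x‖ ^ 2 = 0 := by
    have h0 : lam ^ 2 * ∫ x, ‖Lg x‖ ^ 2 ≤ 0 := by linarith [hle, hileft]
    have hl2 : 0 < lam ^ 2 := by positivity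
    nlinarith
  -- a.e. vanishing
  have hae : (fun x => ‖Lg x‖ ^ 2) =ᵐ[volume] 0 := by
    rw [← integral_eq_zero_iff_of_nonneg (fun x => sq_nonneg _) h2] at *
    exact hint0
  -- everywhere vanishing using continuity and positivity on open sets
  have hL0 : ∀ x, Lg x = 0 := by
    by_contra hc
    push_neg at hc
    obtain ⟨x₀, hx₀⟩ := hc
    set U : Set M := Lg ⁻¹' {0}ᶜ with hU
    have hUopen : IsOpen U := (isClosed_singleton.isOpen_compl).preimage hcont
    have hUne : U.Nonempty := ⟨x₀, hx₀⟩
    have hUpos := hpos U hUopen hUne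
    have hU0 : volume U = 0 := by
      refine measure_mono_null ?_ hae
      intro x hx
      simp only [Set.mem_setOf_eq, Pi.zero_apply] at *
      intro h
      exact hx (by simpa using pow_eq_zero_iff (n := 2) (by norm_num) |>.mp h)
    exact absurd hU0 (ne_of_gt hUpos)
  refine ⟨hL0, ?_⟩
  have hmu : ∀ x, r x = mu := by
    intro x
    have h := hsol x
    rw [hLie hL0 x, hL0 x, smul_zero, add_zero] at h
    rcases smul_eq_zero.mp h.symm with h' | h'
    · linarith [sub_eq_zero.mp h']
    · exact absurd h' (hg0 x)
  intro x y; rw [hmu x, hmu y]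
end

section
/- Let ζ be a 2-Killing vector field on a warped product M₁ ×_f M₂ such that λf² − 2ζ₁(f²) is nowhere zero. Then (M₂, g₂, ζ₂, λ, μ) is a hyperbolic Yamabe soliton if and only if £_{ζ₂}g₂ = [((μ − r₂)f² + ζ₁(ζ₁(f²)))/(λf² − 2ζ₁(f²))] g₂, where r₂ is the scalar curvature of (M₂, g₂). -/
/-!
Eliminating `F • ££g₂` with the 2-Killing relation shows that `F` times the soliton defect
`££g₂ + λ£g₂ - (μ - r₂)g₂` equals `(λF - 2ζ₁F) • £g₂ - ((μ - r₂)F + ζ₁ζ₁F) • g₂`. Since neither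
`F` nor `λF - 2ζ₁F` vanishes, one side is zero exactly when the other is.
-/

theorem smul_soliton_sub_eq_of_two_killing {K V : Type*} [CommRing K] [AddCommGroup V]
    [Module K V] {F ζF ζζF lam s : K} {g L LL : V}
    (h : F • LL + (2 * ζF) • L + ζζF • g = 0) :
    F • (LL + lam • L - s • g) = (lam * F - 2 * ζF) • L - (s * F + ζζF) • g := by
  linear_combination (norm := module) h

theorem eq_div_smul_iff {K V : Type*} [Field K] [AddCommGroup V] [Module K V]
    {D c : K} (hD : D ≠ 0) {x y : V} : x = (c / D) • y ↔ D • x = c • y := by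
  rw [div_eq_inv_mul, mul_smul, eq_inv_smul_iff₀ hD]

theorem soliton_iff_of_two_killing {K V : Type*} [Field K] [AddCommGroup V] [Module K V]
    {F ζF ζζF lam s : K} {g L LL : V} (hF : F ≠ 0) (hD : lam * F - 2 * ζF ≠ 0)
    (h : F • LL + (2 * ζF) • L + ζζF • g = 0) :
    LL + lam • L = s • g ↔ L = ((s * F + ζζF) / (lam * F - 2 * ζF)) • g := by
  rw [eq_div_smul_iff hD, ← sub_eq_zero, ← sub_eq_zero (a := _ • L),
    ← smul_soliton_sub_eq_of_two_killing h, smul_eq_zero_iff_right hF]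

theorem stmt_15_general
    {M₁ M₂ E₂ : Type*}
    [AddCommGroup E₂] [Module ℝ E₂] [Nonempty M₁]
    (g2 L2 LL2 : M₂ → E₂) (r2 : M₂ → ℝ)
    (F ζ1F ζ1ζ1F : M₁ → ℝ)
    (lam mu : ℝ)
    (hFpos : ∀ x, 0 < F x)
    -- λf² - 2ζ₁(f²) is nowhere zero
    (hden : ∀ x, lam * F x - 2 * ζ1F x ≠ 0)
    -- 2-Killing condition, M₂-component
    (h2K : ∀ (x : M₁) (y : M₂),
      F x • LL2 y + (2 * ζ1F x) • L2 y + ζ1ζ1F x • g2 y = 0) :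
    (∀ y, LL2 y + lam • L2 y = (mu - r2 y) • g2 y)
      ↔ ∀ (x : M₁) (y : M₂),
          L2 y = (((mu - r2 y) * F x + ζ1ζ1F x) / (lam * F x - 2 * ζ1F x)) • g2 y := by
  have key x y := soliton_iff_of_two_killing (s := mu - r2 y) (hFpos x).ne' (hden x) (h2K x y)
  constructor
  · exact fun hs x y => (key x y).1 (hs y)
  · obtain ⟨x⟩ := ‹Nonempty M₁›
    exact fun h y => (key x y).2 (h x y)

/-- For a 2-Killing vector field `ζ = ζ₁ + ζ₂` on a warped product
`M₁ ×_f M₂` (with `F = f² > 0`) such that `λF - 2ζ₁(F)` is nowhere zero,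
`(M₂, g₂, ζ₂, λ, μ)` is a hyperbolic Yamabe soliton iff
`£_{ζ₂}g₂ = [((μ - r₂)F + ζ₁(ζ₁(F)))/(λF - 2ζ₁(F))] g₂`. -/
theorem stmt_15
    {M₁ M₂ E₂ : Type*}
    [AddCommGroup E₂] [Module ℝ E₂] [Nonempty M₁] [Nonempty M₂]
    (g2 L2 LL2 : M₂ → E₂) (r2 : M₂ → ℝ)
    (F ζ1F ζ1ζ1F : M₁ → ℝ)
    (lam mu : ℝ)
    (hFpos : ∀ x, 0 < F x)
    -- λf² - 2ζ₁(f²) is nowhere zero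
    (hden : ∀ x, lam * F x - 2 * ζ1F x ≠ 0)
    -- 2-Killing condition, M₂-component
    (h2K : ∀ (x : M₁) (y : M₂),
      F x • LL2 y + (2 * ζ1F x) • L2 y + ζ1ζ1F x • g2 y = 0) :
    (∀ y, LL2 y + lam • L2 y = (mu - r2 y) • g2 y)
      ↔ ∀ (x : M₁) (y : M₂),
          L2 y = (((mu - r2 y) * F x + ζ1ζ1F x) / (lam * F x - 2 * ζ1F x)) • g2 y :=
  stmt_15_general g2 L2 LL2 r2 F ζ1F ζ1ζ1F lam mu hFpos hden h2K
end
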